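/- arXiv:1602.00240 — 2 statements merged into one kernel-verified Lean document; each statement's English description precedes it below -/
import Mathlib

section
/- The digital image (Z, 2) (the integers with 2-adjacency) has no 2-hole — every 2-path subset of Z is 2-nullhomotopic in Z — but Z is 2-connected and not 2-contractible. -/
/- ## General framework for digital topology -/

variable {α : Type*}

/-- A (2,κ)-continuous path of length `m` in the digital image `X`. -/
def PathOn (X : Set α) (κ : α → α → Prop) (m : ℕ) (f : ℕ → α) : Prop :=
  (∀ i ≤ m, f i ∈ X) ∧ ∀ i < m, f i = f (i + 1) ∨ κ (f i) (f (i + 1))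

/-- A κ-loop of length `m` based at `x0`. -/
def IsLoop (X : Set α) (κ : α → α → Prop) (x0 : α) (m : ℕ) (f : ℕ → α) : Prop :=
  PathOn X κ m f ∧ f 0 = x0 ∧ f m = x0

/-- `f'` (of length `m'`) is a trivial extension of `f` (of length `m`):
it traverses the same path, with pauses. -/
def TrivExt (m : ℕ) (f : ℕ → α) (m' : ℕ) (f' : ℕ → α) : Prop :=
  ∃ φ : ℕ → ℕ, φ 0 = 0 ∧ φ m' = m ∧
    (∀ i < m', φ (i + 1) = φ i ∨ φ (i + 1) = φ i + 1) ∧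
    ∀ i ≤ m', f' i = f (φ i)

/-- A homotopy between loops `F` and `G` of the same length `m`, holding the
endpoints fixed at `x0`. -/
def HtpyFixed (X : Set α) (κ : α → α → Prop) (x0 : α) (m M : ℕ) (F G : ℕ → α) : Prop :=
  ∃ H : ℕ → ℕ → α,
    (∀ s ≤ m, ∀ t ≤ M, H s t ∈ X) ∧
    (∀ s ≤ m, H s 0 = F s ∧ H s M = G s) ∧
    (∀ t ≤ M, ∀ s, s < m → (H s t = H (s + 1) t ∨ κ (H s t) (H (s + 1) t))) ∧
    (∀ s ≤ m, ∀ t, t < M → (H s t = H s (t + 1) ∨ κ (H s t) (H s (t + 1)))) ∧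
    (∀ t ≤ M, H 0 t = x0 ∧ H m t = x0)

/-- Two loops based at `x0` belong to the same loop class: they have trivial
extensions of a common length which are homotopic holding the endpoints fixed. -/
def LoopEquiv (X : Set α) (κ : α → α → Prop) (x0 : α)
    (m : ℕ) (f : ℕ → α) (n : ℕ) (g : ℕ → α) : Prop :=
  ∃ m' f' g', TrivExt m f m' f' ∧ TrivExt n g m' g' ∧ ∃ M, HtpyFixed X κ x0 m' M f' g'

/-- The digital fundamental group `Π_1^κ(X,x0)` is trivial: every κ-loop based
at `x0` is in the class of the constant loop. -/
def Pi1Trivial (X : Set α) (κ : α → α → Prop) (x0 : α) : Prop :=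
  ∀ m f, IsLoop X κ x0 m f → LoopEquiv X κ x0 m f 0 (fun _ => x0)

/-- Adjacent or equal. -/
def AdjEq (κ : α → α → Prop) (a b : α) : Prop := a = b ∨ κ a b

/-- `H` is a κ-homotopy (of length `M`) from the identity map of `X` to a constant map. -/
def Contraction (X : Set α) (κ : α → α → Prop) (M : ℕ) (H : α → ℕ → α) : Prop :=
  (∀ x ∈ X, ∀ t ≤ M, H x t ∈ X) ∧
  (∀ x ∈ X, H x 0 = x) ∧
  (∃ p ∈ X, ∀ x ∈ X, H x M = p) ∧
  (∀ t ≤ M, ∀ x ∈ X, ∀ y ∈ X, κ x y → AdjEq κ (H x t) (H y t)) ∧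
  (∀ x ∈ X, ∀ t, t < M → AdjEq κ (H x t) (H x (t + 1)))

/-- `X` is κ-contractible. -/
def Contractible (X : Set α) (κ : α → α → Prop) : Prop :=
  ∃ M H, Contraction X κ M H

/-- `(X,x0)` is pointed κ-contractible: a contraction to `x0` holding `x0` fixed. -/
def PointedContractible (X : Set α) (κ : α → α → Prop) (x0 : α) : Prop :=
  ∃ M H, Contraction X κ M H ∧ (∀ t ≤ M, H x0 t = x0) ∧ ∀ x ∈ X, H x M = x0

/-- The subset `Y` of `X` is κ-nullhomotopic in `X`: its inclusion map is
homotopic in `X` to a constant map. -/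
def NullhomotopicIn (Y X : Set α) (κ : α → α → Prop) : Prop :=
  ∃ M, ∃ H : α → ℕ → α,
    (∀ y ∈ Y, ∀ t ≤ M, H y t ∈ X) ∧
    (∀ y ∈ Y, H y 0 = y) ∧
    (∃ p ∈ X, ∀ y ∈ Y, H y M = p) ∧
    (∀ t ≤ M, ∀ x ∈ Y, ∀ y ∈ Y, κ x y → AdjEq κ (H x t) (H y t)) ∧
    (∀ y ∈ Y, ∀ t, t < M → AdjEq κ (H y t) (H y (t + 1)))

/-- `P` is a κ-path subset of `X`: the image of a κ-path in `X`. -/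
def IsPathSubset (P X : Set α) (κ : α → α → Prop) : Prop :=
  ∃ m f, PathOn X κ m f ∧ (∀ i ≤ m, f i ∈ P) ∧ ∀ p ∈ P, ∃ i ≤ m, f i = p

/-- `X` has no κ-hole: every κ-path subset of `X` is κ-nullhomotopic in `X`. -/
def NoHole (X : Set α) (κ : α → α → Prop) : Prop :=
  ∀ P : Set α, IsPathSubset P X κ → NullhomotopicIn P X κ

/-- `X` is κ-connected (and nonempty). -/
def ConnectedDig (X : Set α) (κ : α → α → Prop) : Prop :=
  X.Nonempty ∧ ∀ a ∈ X, ∀ b ∈ X, ∃ m f, PathOn X κ m f ∧ f 0 = a ∧ f m = b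

/-- The κ-component of `x` in `X`. -/
def Component (X : Set α) (κ : α → α → Prop) (x : α) : Set α :=
  {y | y ∈ X ∧ ∃ m f, PathOn X κ m f ∧ f 0 = x ∧ f m = y}

/-- A loop-preserving homotopy from the loop `f` to the loop `g`
(each stage is a loop; the basepoint may move). -/
def LoopPresHtpy (X : Set α) (κ : α → α → Prop) (m M : ℕ)
    (f g : ℕ → α) (H : ℕ → ℕ → α) : Prop :=
  (∀ s ≤ m, ∀ t ≤ M, H s t ∈ X) ∧
  (∀ s ≤ m, H s 0 = f s ∧ H s M = g s) ∧
  (∀ t ≤ M, ∀ s, s < m → (H s t = H (s + 1) t ∨ κ (H s t) (H (s + 1) t))) ∧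
  (∀ s ≤ m, ∀ t, t < M → (H s t = H s (t + 1) ∨ κ (H s t) (H s (t + 1)))) ∧
  (∀ t ≤ M, H 0 t = H m t)

/-- `X` has no κ-loophole: every κ-loop in `X` is nullhomotopic in `X` by a
loop-preserving homotopy. -/
def NoLoophole (X : Set α) (κ : α → α → Prop) : Prop :=
  ∀ m f, PathOn X κ m f → f 0 = f m →
    ∃ p ∈ X, ∃ M H, LoopPresHtpy X κ m M f (fun _ => p) H

/- ## Concrete adjacencies and images -/

/-- 6-adjacency (c₁-adjacency) on ℤ³. -/
def adj6 (p q : ℤ × ℤ × ℤ) : Prop :=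
  |p.1 - q.1| + |p.2.1 - q.2.1| + |p.2.2 - q.2.2| = 1

/-- 26-adjacency (c₃-adjacency) on ℤ³. -/
def adj26 (p q : ℤ × ℤ × ℤ) : Prop :=
  p ≠ q ∧ |p.1 - q.1| ≤ 1 ∧ |p.2.1 - q.2.1| ≤ 1 ∧ |p.2.2 - q.2.2| ≤ 1

/-- 18-adjacency (c₂-adjacency) on ℤ³. -/
def adj18 (p q : ℤ × ℤ × ℤ) : Prop :=
  adj26 p q ∧ (p.1 = q.1 ∨ p.2.1 = q.2.1 ∨ p.2.2 = q.2.2)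

/-- 4-adjacency (c₁-adjacency) on ℤ². -/
def adj4 (p q : ℤ × ℤ) : Prop := |p.1 - q.1| + |p.2 - q.2| = 1

/-- 8-adjacency (c₂-adjacency) on ℤ². -/
def adj8 (p q : ℤ × ℤ) : Prop := p ≠ q ∧ |p.1 - q.1| ≤ 1 ∧ |p.2 - q.2| ≤ 1

/-- 2-adjacency (c₁-adjacency) on ℤ. -/
def adj2 (m n : ℤ) : Prop := |m - n| = 1

/-- The 10-point digital 2-sphere `MSS₁₈`. -/
def MSS18 : Set (ℤ × ℤ × ℤ) :=
  {(0,0,0), (1,1,0), (1,2,0), (0,3,0), (-1,2,0),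
   (-1,1,0), (0,1,-1), (0,2,-1), (0,2,1), (0,1,1)}

/-- The 6-point digital 2-sphere `MSS'₁₈ = MSS'₂₆`. -/
def MSS18' : Set (ℤ × ℤ × ℤ) :=
  {(0,0,0), (1,1,0), (0,2,0), (-1,1,0), (0,1,-1), (0,1,1)}

/-- The digital 2-sphere `MSS₆ = [0,2]³ \ {(1,1,1)}`. -/
def MSS6 : Set (ℤ × ℤ × ℤ) :=
  {p | (0 ≤ p.1 ∧ p.1 ≤ 2) ∧ (0 ≤ p.2.1 ∧ p.2.1 ≤ 2) ∧ (0 ≤ p.2.2 ∧ p.2.2 ≤ 2) ∧ p ≠ (1,1,1)}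

/-- The image `X = ([0,2]² × [0,1]) \ {(1,1,1)}` of Example 2.11. -/
def Xbox : Set (ℤ × ℤ × ℤ) :=
  {p | (0 ≤ p.1 ∧ p.1 ≤ 2) ∧ (0 ≤ p.2.1 ∧ p.2.1 ≤ 2) ∧ (0 ≤ p.2.2 ∧ p.2.2 ≤ 1) ∧ p ≠ (1,1,1)}


/-- Auxiliary: move `y` toward `0` by `t` steps, clamped at `0`. -/
def gshift (t : ℕ) (y : ℤ) : ℤ := if 0 ≤ y then max (y - t) 0 else min (y + t) 0

lemma adjEq_of_abs (a b : ℤ) (h : |a - b| ≤ 1) : AdjEq adj2 a b := by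
  unfold AdjEq adj2
  rw [abs_le] at h
  rw [abs_eq (by norm_num : (0:ℤ) ≤ 1)]
  omega

lemma abs_of_adjEq {a b : ℤ} (h : a = b ∨ adj2 a b) : |b - a| ≤ 1 := by
  rcases h with h | h
  · simp [h]
  · unfold adj2 at h
    rw [abs_sub_comm] at h
    exact le_of_eq h

lemma steps_bound (F : ℕ → ℤ) :
    ∀ n, (∀ i < n, |F (i + 1) - F i| ≤ 1) → |F n - F 0| ≤ n := by
  intro n
  induction n with
  | zero => simp
  | succ k ih =>
      intro h
      have h1 := ih (fun i hi => h i (by omega))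
      have h2 := h k (by omega)
      have h3 := abs_sub_le (F (k + 1)) (F k) (F 0)
      push_cast
      push_cast at h1
      linarith

lemma gshift_zero (y : ℤ) : gshift 0 y = y := by
  unfold gshift; split_ifs <;> omega

lemma gshift_done (t : ℕ) (y : ℤ) (h : |y| ≤ t) : gshift t y = 0 := by
  rw [abs_le] at h
  unfold gshift; split_ifs <;> omega

lemma gshift_lip (t : ℕ) (x y : ℤ) (h : |x - y| ≤ 1) :
    |gshift t x - gshift t y| ≤ 1 := by
  unfold gshift
  rw [abs_le] at h ⊢
  constructor <;> split_ifs <;> omega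

lemma gshift_step (t : ℕ) (y : ℤ) : |gshift t y - gshift (t + 1) y| ≤ 1 := by
  unfold gshift
  rw [abs_le]
  push_cast
  constructor <;> split_ifs <;> omega

/-- `(ℤ,2)` has no 2-hole, is 2-connected, and is not 2-contractible. -/
theorem stmt14 :
    NoHole (Set.univ : Set ℤ) adj2 ∧
    ConnectedDig (Set.univ : Set ℤ) adj2 ∧
    ¬ Contractible (Set.univ : Set ℤ) adj2 := by
  refine ⟨?_, ?_, ?_⟩
  · -- NoHole
    rintro P ⟨m, f, ⟨hmem, hadj⟩, hfP, hPf⟩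
    -- every point of P has |y| ≤ |f 0| + m
    have hbound : ∀ y ∈ P, |y| ≤ (f 0).natAbs + m := by
      intro y hy
      obtain ⟨i, him, hfi⟩ := hPf y hy
      have hi : |f i - f 0| ≤ i := steps_bound f i (fun j hj =>
        abs_of_adjEq (hadj j (by omega)))
      have h2 := abs_sub_abs_le_abs_sub (f i) (f 0)
      have h0 : |f 0| = ((f 0).natAbs : ℤ) := Int.abs_eq_natAbs _
      have h3 : (i : ℤ) ≤ m := by exact_mod_cast him
      rw [← hfi]
      push_cast
      linarith
    refine ⟨(f 0).natAbs + m, fun y t => gshift t y, ?_, ?_, ?_, ?_, ?_⟩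
    · intro y _ t _; trivial
    · intro y _; exact gshift_zero y
    · exact ⟨0, trivial, fun y hy => gshift_done _ y (hbound y hy)⟩
    · intro t _ x hx y hy hxy
      exact adjEq_of_abs _ _ (gshift_lip t x y (le_of_eq hxy))
    · intro y _ t _
      exact adjEq_of_abs _ _ (gshift_step t y)
  · -- Connected
    refine ⟨⟨0, trivial⟩, ?_⟩
    intro a _ b _
    refine ⟨(b - a).natAbs, fun i => if a ≤ b then min (a + i) b else max (a - i) b,
      ⟨fun i _ => trivial, ?_⟩, ?_, ?_⟩
    · intro i _
      by_cases hab : a ≤ b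
      · simp only [if_pos hab]
        rcases eq_or_lt_of_le (min_le_right (a + (i:ℤ)) b) with h | h
        · left; push_cast; omega
        · right; unfold adj2; push_cast; rw [abs_eq (by norm_num : (0:ℤ) ≤ 1)]; omega
      · simp only [if_neg hab]
        right; unfold adj2; push_cast; rw [abs_eq (by norm_num : (0:ℤ) ≤ 1)]; omega
    · split_ifs <;> (beta_reduce; omega)
    · split_ifs <;> (beta_reduce; omega)
  · -- Not contractible
    rintro ⟨M, H, hX, h0, ⟨p, _, hp⟩, _, hstep⟩
    have key : ∀ x : ℤ, |x - p| ≤ M := by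
      intro x
      have hs := steps_bound (fun t => H x t) M (fun i hi => by
        have := hstep x trivial i hi
        exact abs_of_adjEq (by exact this))
      simpa [h0 x trivial, hp x trivial, abs_sub_comm] using hs
    have h := key (p + (M + 1))
    rw [add_sub_cancel_left, abs_of_nonneg (by positivity)] at h
    omega
end

section
/- Let X be a digital image each of whose components is finite. If X has no κ-hole, then X has no κ-loophole: every κ-loop in X is nullhomotopic by a loop-preserving homotopy. (Proof composes a contraction of the component containing the loop with the loop itself.) -/
/- ## General framework for digital topology -/

variable {α : Type*}

/-- if each κ-component of `X` is finite and `X` has no κ-hole,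
then `X` has no κ-loophole. -/
theorem stmt18 {β : Type*} (X : Set β) (κ : β → β → Prop)
    (hfin : ∀ x ∈ X, (Component X κ x).Finite) (h : NoHole X κ) :
    NoLoophole X κ := by
  intro m f hpath hloop
  set P : Set β := {y | ∃ i ≤ m, f i = y} with hP
  have hps : IsPathSubset P X κ := by
    refine ⟨m, f, hpath, fun i hi => ⟨i, hi, rfl⟩, fun p hp => hp⟩
  obtain ⟨M, H, hmem, h0, ⟨p, hpX, hM⟩, hadj, htime⟩ := h P hps
  have hfP : ∀ s ≤ m, f s ∈ P := fun s hs => ⟨s, hs, rfl⟩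
  refine ⟨p, hpX, M, fun s t => H (f s) t, ?_, ?_, ?_, ?_, ?_⟩
  · exact fun s hs t ht => hmem _ (hfP s hs) t ht
  · exact fun s hs => ⟨h0 _ (hfP s hs), hM _ (hfP s hs)⟩
  · intro t ht s hsm
    rcases hpath.2 s hsm with he | hk
    · left; simp only [he]
    · exact hadj t ht _ (hfP s hsm.le) _ (hfP _ hsm) hk
  · exact fun s hs t ht => htime _ (hfP s hs) t ht
  · intro t ht; simp only [hloop]
end
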